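/- Let n ≥ 4 be an integer. If G is a graph on n vertices in which every vertex has triangle-degree at least C(n−2, 2), then e(G) ≥ C(n,2) − 1. -/

import Mathlib

/-!
Triangles through `v` correspond to edges inside the neighbourhood of `v`, so
`triangleDeg v ≤ C(deg v, 2)`, strictly if the neighbourhood misses an edge. A vertex with two
non-neighbours thus lies in at most `C(n - 3, 2) < C(n - 2, 2)` triangles, so the complement of `G`
has maximum degree at most one. If it had two disjoint edges `ab` and `cd`, then `deg a = n - 2`
and `c, d` would be non-adjacent neighbours of `a`, giving `triangleDeg a < C(n - 2, 2)`. Hence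
the complement has at most one edge.
-/

/-- The triangle-degree of `v`: the number of triangles of `G` containing `v`. -/
def triangleDeg {V : Type*} [Fintype V] [DecidableEq V]
    (G : SimpleGraph V) [DecidableRel G.Adj] (v : V) : ℕ :=
  ((G.cliqueFinset 3).filter (fun s => v ∈ s)).card

open Finset SimpleGraph

namespace SimpleGraph

variable {V : Type*} [Fintype V]

theorem eq_of_adj_of_degree_le_one {H : SimpleGraph V} [DecidableRel H.Adj] {v x y : V}
    (hv : H.degree v ≤ 1) (hx : H.Adj v x) (hy : H.Adj v y) : x = y :=
  card_le_one.1 hv x ((mem_neighborFinset _ _ _).2 hx) y ((mem_neighborFinset _ _ _).2 hy)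

variable [DecidableEq V]

theorem card_edgeFinset_add_card_edgeFinset_compl (G : SimpleGraph V) [DecidableRel G.Adj] :
    #G.edgeFinset + #Gᶜ.edgeFinset = (Fintype.card V).choose 2 := by
  rw [← card_edgeFinset_top_eq_card_choose_two, ← card_union_of_disjoint
    (disjoint_edgeFinset.2 disjoint_compl_right), ← edgeFinset_sup]
  congr 1
  exact edgeFinset_inj.2 sup_compl_eq_top

theorem card_edgeFinset_le_one (H : SimpleGraph V) [DecidableRel H.Adj]
    (hdeg : ∀ v, H.degree v ≤ 1)
    (hdisj : ∀ a b c d, H.Adj a b → H.Adj c d → c ≠ a → c ≠ b → d ≠ a → d ≠ b → False) :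
    #H.edgeFinset ≤ 1 := by
  refine card_le_one.2 fun e₁ he₁ e₂ he₂ => ?_
  induction e₁ using Sym2.ind with | _ a b =>
  induction e₂ using Sym2.ind with | _ c d =>
  rw [mem_edgeFinset, mem_edgeSet] at he₁ he₂
  have uniq {v x y : V} : H.Adj v x → H.Adj v y → x = y := eq_of_adj_of_degree_le_one (hdeg v)
  by_cases hca : c = a
  · subst hca; rw [uniq he₁ he₂]
  by_cases hcb : c = b
  · subst hcb; rw [uniq he₁.symm he₂, Sym2.eq_swap]
  by_cases hda : d = a
  · subst hda; rw [uniq he₁ he₂.symm, Sym2.eq_swap]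
  by_cases hdb : d = b
  · subst hdb; rw [uniq he₁.symm he₂.symm]
  exact (hdisj a b c d he₁ he₂ hca hcb hda hdb).elim

end SimpleGraph

section TriangleDegree

variable {V : Type*} [Fintype V] [DecidableEq V] (G : SimpleGraph V) [DecidableRel G.Adj]

theorem triangleDeg_le_card_edges_neighborFinset (v : V) :
    triangleDeg G v ≤ #{p ∈ (G.neighborFinset v).powersetCard 2 | p ∈ G.cliqueFinset 2} := by
  refine card_le_card_of_injOn (fun s => s.erase v) (fun s hs => ?_) fun s hs t ht hst => ?_
  · simp only [coe_filter, Set.mem_ofPred_eq, mem_cliqueFinset_iff] at hs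
    obtain ⟨hs, hv⟩ := hs
    simp only [coe_filter, Set.mem_ofPred_eq, mem_powersetCard, mem_cliqueFinset_iff]
    refine ⟨⟨fun x hx => ?_, (hs.erase_of_mem hv).card_eq⟩, hs.erase_of_mem hv⟩
    obtain ⟨hxv, hx⟩ := mem_erase.1 hx
    exact (mem_neighborFinset _ _ _).2 (hs.isClique hv hx hxv.symm)
  · simp only [coe_filter, Set.mem_ofPred_eq] at hs ht
    rw [← insert_erase hs.2, ← insert_erase ht.2]
    exact congrArg (insert v) hst

theorem triangleDeg_le_choose_degree (v : V) : triangleDeg G v ≤ (G.degree v).choose 2 := by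
  refine (triangleDeg_le_card_edges_neighborFinset G v).trans ?_
  rw [← card_neighborFinset_eq_degree, ← card_powersetCard]
  exact card_filter_le _ _

theorem triangleDeg_lt_choose_degree {v c d : V} (hvc : G.Adj v c) (hvd : G.Adj v d)
    (hcd : c ≠ d) (hncd : ¬G.Adj c d) : triangleDeg G v < (G.degree v).choose 2 := by
  refine (triangleDeg_le_card_edges_neighborFinset G v).trans_lt ?_
  rw [← card_neighborFinset_eq_degree, ← card_powersetCard]
  refine card_lt_card ⟨filter_subset _ _, fun h => hncd ?_⟩
  have hpair : ({c, d} : Finset V) ∈ (G.neighborFinset v).powersetCard 2 := by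
    rw [mem_powersetCard, card_pair hcd]
    refine ⟨insert_subset_iff.2 ⟨?_, singleton_subset_iff.2 ?_⟩, rfl⟩ <;> simpa
  have hclique := (mem_cliqueFinset_iff.1 (mem_filter.1 (h hpair)).2).isClique
  rw [coe_pair, isClique_pair] at hclique
  exact hclique hcd

theorem compl_degree_le_one_of_le_triangleDeg (hV : 4 ≤ Fintype.card V)
    (hdeg : ∀ v, (Fintype.card V - 2).choose 2 ≤ triangleDeg G v) (v : V) :
    Gᶜ.degree v ≤ 1 := by
  by_contra! h
  have hdeg_le : G.degree v ≤ Fintype.card V - 3 := by rw [degree_compl] at h; omega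
  have hgrow : (Fintype.card V - 3).choose 2 < (Fintype.card V - 2).choose 2 := by
    rw [show Fintype.card V - 2 = Fintype.card V - 3 + 1 by omega, Nat.choose_succ_succ',
      Nat.choose_one_right]
    exact Nat.lt_add_of_pos_left (by omega)
  have := (hdeg v).trans <| (triangleDeg_le_choose_degree G v).trans <|
    Nat.choose_le_choose 2 hdeg_le
  omega

/-- Every vertex other than `a` and `b` is adjacent to `a`, so the non-edge `cd` inside the
neighbourhood of `a` costs `a` a triangle. -/
theorem not_disjoint_compl_adj_of_le_triangleDeg
    (hdeg : ∀ v, (Fintype.card V - 2).choose 2 ≤ triangleDeg G v)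
    (hcompl : ∀ v, Gᶜ.degree v ≤ 1) {a b c d : V} (hab : Gᶜ.Adj a b) (hcd : Gᶜ.Adj c d)
    (hca : c ≠ a) (hcb : c ≠ b) (hda : d ≠ a) (hdb : d ≠ b) : False := by
  have adj_of_ne {x : V} (hxa : x ≠ a) (hxb : x ≠ b) : G.Adj a x := by
    by_contra h
    exact hxb (eq_of_adj_of_degree_le_one (hcompl a) ((compl_adj G a x).2 ⟨hxa.symm, h⟩) hab)
  have hdeg_le : G.degree a ≤ Fintype.card V - 2 := by
    have := (degree_pos_iff_exists_adj (G := Gᶜ) a).2 ⟨b, hab⟩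
    rw [degree_compl] at this
    omega
  have := (hdeg a).trans_lt <| (triangleDeg_lt_choose_degree G (adj_of_ne hca hcb)
    (adj_of_ne hda hdb) hcd.ne ((compl_adj G c d).1 hcd).2).trans_le <|
    Nat.choose_le_choose 2 hdeg_le
  omega

end TriangleDegree

/-- The case `t = n - 2`: if every vertex of an `n`-vertex graph `G` (`n ≥ 4`)
lies in at least `C(n-2,2)` triangles, then `e(G) ≥ C(n,2) - 1`. -/
theorem edges_case_t_eq_n_sub_two (n : ℕ) (hn : 4 ≤ n)
    (V : Type) [Fintype V] [DecidableEq V] (hV : Fintype.card V = n)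
    (G : SimpleGraph V) [DecidableRel G.Adj]
    (hdeg : ∀ v : V, Nat.choose (n - 2) 2 ≤ triangleDeg G v) :
    Nat.choose n 2 - 1 ≤ G.edgeFinset.card := by
  subst hV
  have hcompl := compl_degree_le_one_of_le_triangleDeg G hn hdeg
  have hsum := card_edgeFinset_add_card_edgeFinset_compl G
  have hnonedges := Gᶜ.card_edgeFinset_le_one hcompl
    fun _ _ _ _ hab hcd => not_disjoint_compl_adj_of_le_triangleDeg G hdeg hcompl hab hcd
  omega
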